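/- arXiv:math/9501206 — 3 statements merged into one kernel-verified Lean document; each statement's English description precedes it below -/
import Mathlib

section
/- Let T ⊆ 𝒯 be a nonempty subtree (closed under initial segments). Then T satisfies condition (4) — for every s ∈ T and every m there exists t ∈ T with s ⊆ t such that t has at least (P_{ind(t)})^m successors in T — if and only if the following two conditions hold: (i) every s ∈ T has at least one successor in T; and (ii) for every n, if the node s with ind(s) = n belongs to T, then there exists k such that the node t with ind(t) = k satisfies t ∈ T, s ⊆ t, and t has at least P_k^n successors in T. -/
/-- `P_0 = 1` and `P_{k+1} = P_k · N_k`, where `N_0 = 1` and `N_k = 2 ^ P_k`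
for `k ≥ 1`; hence `P_k = N_0 · N_1 · … · N_{k-1}`. -/
def Pseq : ℕ → ℕ
  | 0 => 1
  | k + 1 => Pseq k * (if k = 0 then 1 else 2 ^ Pseq k)

/-- `N_0 = 1` and `N_k = 2 ^ P_k` for `k ≥ 1`
(so `N_k = 1, 2, 4, 256, 2^2048, …`). -/
def Nseq (k : ℕ) : ℕ := if k = 0 then 1 else 2 ^ Pseq k

/-- A tree: a set of finite sequences of natural numbers closed under
initial segments. -/
def IsTree (T : Set (List ℕ)) : Prop :=
  ∀ s ∈ T, ∀ t : List ℕ, t <+: s → t ∈ T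

/-- The node `t` has at least `n` successors in `T`, i.e. there are at least
`n` distinct `i` with `t ⌢ i ∈ T`. -/
def HasAtLeastSucc (T : Set (List ℕ)) (t : List ℕ) (n : ℕ) : Prop :=
  ∃ S : Finset ℕ, S.card = n ∧ ∀ i ∈ S, t ++ [i] ∈ T

/-- `(Tr, ind)` is the master tree together with its index function:
`Tr` is a tree, `ind` is a bijection of `Tr` onto `ℕ` with `ind(⟨⟩) = 0`,
`ind` respects length and (for equal lengths) the lexicographic order, and
every `s ∈ Tr` with `ind s = k` has exactly the `N_k` successors `s ⌢ i`,
`i < N_k`, in `Tr`. -/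
def IsMasterTree (Tr : Set (List ℕ)) (ind : List ℕ → ℕ) : Prop :=
  IsTree Tr ∧
  Set.BijOn ind Tr Set.univ ∧
  ind [] = 0 ∧
  (∀ s ∈ Tr, ∀ t ∈ Tr, s.length < t.length → ind s < ind t) ∧
  (∀ s ∈ Tr, ∀ t ∈ Tr, s.length = t.length → List.Lex (· < ·) s t → ind s < ind t) ∧
  (∀ s ∈ Tr, ∀ i : ℕ, s ++ [i] ∈ Tr ↔ i < Nseq (ind s))

/-- `T` belongs to the forcing notion `𝒫`: `T` is a nonempty subtree of the
master tree `Tr` such that for every `s ∈ T` and every `m` there is a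
`t ∈ T` extending `s` with at least `(P_{ind t})^m` successors in `T`. -/
def InForcing (Tr : Set (List ℕ)) (ind : List ℕ → ℕ) (T : Set (List ℕ)) : Prop :=
  T.Nonempty ∧ T ⊆ Tr ∧ IsTree T ∧
  ∀ s ∈ T, ∀ m : ℕ, ∃ t ∈ T, s <+: t ∧ HasAtLeastSucc T t (Pseq (ind t) ^ m)

/-!
Condition (ii) is condition (4) restricted to the exponent `m = ind s`. Since `ind` strictly
increases from a node to each of its successors, condition (i) lets us first extend `s` to a
node `s'` with `ind s' ≥ m`, and `P_k ^ ind s' ≥ P_k ^ m` because `P_k ≥ 1`. Conversely, (4)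
with `m = 1` gives every node an extension with a successor, and a prefix of a node with a
successor has a successor itself.
-/

lemma Pseq_pos (k : ℕ) : 0 < Pseq k := by
  induction k with
  | zero => simp [Pseq]
  | succ k ih =>
    rw [Pseq]
    exact Nat.mul_pos ih (by split <;> positivity)

section Trees

variable {T : Set (List ℕ)} {s t : List ℕ}

lemma HasAtLeastSucc.mono {a b : ℕ} (h : HasAtLeastSucc T t a) (hba : b ≤ a) :
    HasAtLeastSucc T t b := by
  obtain ⟨S, hcard, hS⟩ := h
  obtain ⟨S', hS'S, hcard'⟩ := Finset.exists_subset_card_eq (hcard ▸ hba)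
  exact ⟨S', hcard', fun i hi => hS i (hS'S hi)⟩

lemma HasAtLeastSucc.exists_append_mem {n : ℕ} (h : HasAtLeastSucc T t n) (hn : 0 < n) :
    ∃ i, t ++ [i] ∈ T := by
  obtain ⟨S, rfl, hS⟩ := h
  obtain ⟨i, hi⟩ := Finset.card_pos.mp hn
  exact ⟨i, hS i hi⟩

lemma IsTree.exists_append_mem_of_prefix (hT : IsTree T) (hst : s <+: t) {i : ℕ}
    (ht : t ++ [i] ∈ T) : ∃ j, s ++ [j] ∈ T := by
  obtain ⟨r, hr⟩ : s <+: t ++ [i] := hst.trans (List.prefix_append t [i])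
  cases r with
  | nil =>
    have := hst.length_le
    simp only [List.append_nil] at hr
    simp [hr] at this
  | cons j r =>
    exact ⟨j, hT _ ht (s ++ [j]) ⟨r, by simp [← hr]⟩⟩

lemma exists_prefix_le_ind {ind : List ℕ → ℕ}
    (hgrow : ∀ s ∈ T, ∀ i, s ++ [i] ∈ T → ind s < ind (s ++ [i]))
    (hsucc : ∀ s ∈ T, ∃ i, s ++ [i] ∈ T) (hs : s ∈ T) (m : ℕ) :
    ∃ t ∈ T, s <+: t ∧ m ≤ ind t := by
  induction m with
  | zero => exact ⟨s, hs, List.prefix_rfl, Nat.zero_le _⟩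
  | succ m ih =>
    obtain ⟨t, ht, hst, hm⟩ := ih
    obtain ⟨i, hi⟩ := hsucc t ht
    exact ⟨t ++ [i], hi, hst.trans (List.prefix_append t [i]),
      hm.trans_lt (hgrow t ht i hi)⟩

end Trees

lemma IsMasterTree.ind_lt_ind_append {Tr : Set (List ℕ)} {ind : List ℕ → ℕ}
    (hM : IsMasterTree Tr ind) {s : List ℕ} {i : ℕ} (hs : s ++ [i] ∈ Tr) :
    ind s < ind (s ++ [i]) := by
  obtain ⟨hTr, -, -, hlen, -⟩ := hM
  exact hlen s (hTr _ hs s (List.prefix_append s [i])) _ hs (by simp)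

theorem condition_four_iff_condition_five_general
    (Tr : Set (List ℕ)) (ind : List ℕ → ℕ) (hM : IsMasterTree Tr ind)
    (T : Set (List ℕ)) (hsub : T ⊆ Tr) (htree : IsTree T) :
    (∀ s ∈ T, ∀ m : ℕ, ∃ t ∈ T, s <+: t ∧ HasAtLeastSucc T t (Pseq (ind t) ^ m)) ↔
      ((∀ s ∈ T, ∃ i : ℕ, s ++ [i] ∈ T) ∧
       (∀ n : ℕ, ∀ s ∈ Tr, ind s = n → s ∈ T →
          ∃ k : ℕ, ∃ t ∈ Tr, ind t = k ∧ t ∈ T ∧ s <+: t ∧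
            HasAtLeastSucc T t (Pseq k ^ n))) := by
  constructor
  · intro h4
    refine ⟨fun s hs => ?_, fun n s _ _ hs => ?_⟩
    · obtain ⟨t, -, hst, ht⟩ := h4 s hs 1
      obtain ⟨i, hi⟩ := ht.exists_append_mem (pow_pos (Pseq_pos _) 1)
      exact htree.exists_append_mem_of_prefix hst hi
    · obtain ⟨t, ht, hst, hsucc⟩ := h4 s hs n
      exact ⟨ind t, t, hsub ht, rfl, ht, hst, hsucc⟩
  · rintro ⟨hsucc, h5⟩ s hs m
    obtain ⟨s', hs', hss', hm⟩ := exists_prefix_le_ind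
      (fun u _ i hi => hM.ind_lt_ind_append (hsub hi)) hsucc hs m
    obtain ⟨k, t, -, rfl, ht, hs't, hk⟩ := h5 (ind s') s' (hsub hs') rfl hs'
    exact ⟨t, ht, hss'.trans hs't, hk.mono (Nat.pow_le_pow_right (Pseq_pos _) hm)⟩

/-- A nonempty subtree `T ⊆ 𝒯` satisfies condition (4) — for every `s ∈ T`
and every `m` there is `t ∈ T` with `s ⊆ t` having at least `(P_{ind t})^m`
successors in `T` — if and only if (i) every `s ∈ T` has at least one
successor in `T`, and (ii) for every `n`, if the node `s` with `ind s = n`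
is in `T` then there is a `k` such that the node `t` with `ind t = k`
satisfies `t ∈ T`, `s ⊆ t`, and `t` has at least `P_k ^ n` successors
in `T`. -/
theorem condition_four_iff_condition_five
    (Tr : Set (List ℕ)) (ind : List ℕ → ℕ) (hM : IsMasterTree Tr ind)
    (T : Set (List ℕ)) (hne : T.Nonempty) (hsub : T ⊆ Tr) (htree : IsTree T) :
    (∀ s ∈ T, ∀ m : ℕ, ∃ t ∈ T, s <+: t ∧ HasAtLeastSucc T t (Pseq (ind t) ^ m)) ↔
      ((∀ s ∈ T, ∃ i : ℕ, s ++ [i] ∈ T) ∧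
       (∀ n : ℕ, ∀ s ∈ Tr, ind s = n → s ∈ T →
          ∃ k : ℕ, ∃ t ∈ Tr, ind t = k ∧ t ∈ T ∧ s <+: t ∧
            HasAtLeastSucc T t (Pseq k ^ n))) :=
  condition_four_iff_condition_five_general Tr ind hM T hsub htree
end

section
/- If T ∈ P and a ∈ T, then (T)_a = {s ∈ T : s ⊆ a or a ⊆ s} also belongs to P. -/
section Restrict

variable {T : Set (List ℕ)} {a : List ℕ}

theorem IsTree.restrict (hT : IsTree T) : IsTree {s ∈ T | s <+: a ∨ a <+: s} := by
  rintro s ⟨hsT, hsa | has⟩ t hts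
  · exact ⟨hT s hsT t hts, Or.inl (hts.trans hsa)⟩
  · exact ⟨hT s hsT t hts, List.prefix_or_prefix_of_prefix hts has⟩

theorem HasAtLeastSucc.restrict {t : List ℕ} {n : ℕ} (h : HasAtLeastSucc T t n)
    (hat : a <+: t) : HasAtLeastSucc {s ∈ T | s <+: a ∨ a <+: s} t n := by
  obtain ⟨S, hcard, hS⟩ := h
  exact ⟨S, hcard, fun i hi => ⟨hS i hi, Or.inr (hat.trans (List.prefix_append t [i]))⟩⟩

theorem exists_prefix_of_mem_restrict {s : List ℕ} (hs : s ∈ {s ∈ T | s <+: a ∨ a <+: s})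
    (ha : a ∈ T) : ∃ u ∈ T, s <+: u ∧ a <+: u := by
  rcases hs with ⟨hsT, hsa | has⟩
  · exact ⟨a, ha, hsa, List.prefix_rfl⟩
  · exact ⟨s, hsT, List.prefix_rfl, has⟩

end Restrict

theorem restrict_mem_forcing_general
    (Tr : Set (List ℕ)) (ind : List ℕ → ℕ)
    (T : Set (List ℕ)) (hT : InForcing Tr ind T) (a : List ℕ) (ha : a ∈ T) :
    InForcing Tr ind {s ∈ T | s <+: a ∨ a <+: s} := by
  obtain ⟨-, hTr, htree, hsplit⟩ := hT
  refine ⟨⟨a, ha, Or.inl List.prefix_rfl⟩, fun s hs => hTr hs.1, htree.restrict, ?_⟩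
  intro s hs m
  obtain ⟨u, huT, hsu, hau⟩ := exists_prefix_of_mem_restrict hs ha
  obtain ⟨t, htT, hut, hsucc⟩ := hsplit u huT m
  exact ⟨t, ⟨htT, Or.inr (hau.trans hut)⟩, hsu.trans hut, hsucc.restrict (hau.trans hut)⟩

/-- If `T ∈ 𝒫` and `a ∈ T`, then `(T)_a = {s ∈ T : s ⊆ a or a ⊆ s}` also
belongs to `𝒫`. -/
theorem restrict_mem_forcing
    (Tr : Set (List ℕ)) (ind : List ℕ → ℕ) (hM : IsMasterTree Tr ind)
    (T : Set (List ℕ)) (hT : InForcing Tr ind T) (a : List ℕ) (ha : a ∈ T) :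
    InForcing Tr ind {s ∈ T | s <+: a ∨ a <+: s} :=
  restrict_mem_forcing_general Tr ind T hT a ha
end

section
/- Let T ∈ P, let s ∈ T, and let u be a function assigning to each natural number k a set u(k) ⊆ {0, 1, …, N_k − 1} with |u(k)| ≤ P_k. Then there exist t ∈ T with s ⊆ t and an i < N_{ind(t)} such that i ∉ u(ind(t)) and t⌢i ∈ T. -/
/-!
Above `s` the tree `T` has a node of length at least `2`, and the index of a node of the master
tree is at least its length, so above that node `T` has a node `t` with `ind t ≥ 2` and at least
`P_{ind t}^2` successors. Since `P_k ≥ 2` for `k ≥ 2`, this beats `|u (ind t)| ≤ P_{ind t}`, so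
one of these successors avoids `u (ind t)`; it lies below `N_{ind t}` because `T ⊆ Tr`.
-/

theorem Pseq_monotone : Monotone Pseq :=
  monotone_nat_of_le_succ fun k =>
    Nat.le_mul_of_pos_right _ (by split_ifs <;> positivity)

theorem two_le_Pseq {k : ℕ} (hk : 2 ≤ k) : 2 ≤ Pseq k :=
  (show Pseq 2 = 2 by decide) ▸ Pseq_monotone hk

theorem IsTree.length_le_of_length_lt_imp_lt {Tr : Set (List ℕ)} {ind : List ℕ → ℕ}
    (hTr : IsTree Tr)
    (hind : ∀ s ∈ Tr, ∀ t ∈ Tr, s.length < t.length → ind s < ind t) :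
    ∀ t ∈ Tr, t.length ≤ ind t := by
  intro t
  induction t using List.reverseRecOn with
  | nil => simp
  | append_singleton t i ih =>
    intro hti
    have ht : t ∈ Tr := hTr _ hti t (List.prefix_append t [i])
    have hlt := hind t ht _ hti (by simp)
    simp only [List.length_append, List.length_singleton]
    exact (Nat.succ_le_succ (ih ht)).trans hlt

theorem IsMasterTree.length_le_ind {Tr : Set (List ℕ)} {ind : List ℕ → ℕ}
    (hM : IsMasterTree Tr ind) {t : List ℕ} (ht : t ∈ Tr) : t.length ≤ ind t :=
  IsTree.length_le_of_length_lt_imp_lt hM.1 hM.2.2.2.1 t ht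

theorem HasAtLeastSucc.exists_notMem {T : Set (List ℕ)} {t : List ℕ} {n : ℕ}
    (h : HasAtLeastSucc T t n) {u : Finset ℕ} (hu : u.card < n) :
    ∃ i ∉ u, t ++ [i] ∈ T := by
  obtain ⟨S, rfl, hS⟩ := h
  obtain ⟨i, hiS, hiu⟩ := Finset.exists_mem_notMem_of_card_lt_card hu
  exact ⟨i, hiu, hS i hiS⟩

theorem InForcing.exists_prefix_length_le {Tr : Set (List ℕ)} {ind : List ℕ → ℕ}
    {T : Set (List ℕ)} (hT : InForcing Tr ind T) {s : List ℕ} (hs : s ∈ T) (n : ℕ) :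
    ∃ t ∈ T, s <+: t ∧ n ≤ t.length := by
  induction n with
  | zero => exact ⟨s, hs, List.prefix_refl s, Nat.zero_le _⟩
  | succ n ih =>
    obtain ⟨t, ht, hst, hn⟩ := ih
    obtain ⟨t', ht', htt', hsucc⟩ := hT.2.2.2 t ht 0
    obtain ⟨i, -, hi⟩ := hsucc.exists_notMem (u := ∅) (by simp)
    refine ⟨t' ++ [i], hi, (hst.trans htt').trans (List.prefix_append t' [i]), ?_⟩
    have := htt'.length_le
    simp only [List.length_append, List.length_singleton]
    omega

theorem exists_successor_avoiding_general
    (Tr : Set (List ℕ)) (ind : List ℕ → ℕ) (hM : IsMasterTree Tr ind)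
    (T : Set (List ℕ)) (hT : InForcing Tr ind T) (s : List ℕ) (hs : s ∈ T)
    (u : ℕ → Finset ℕ)
    (hu2 : ∀ k : ℕ, (u k).card ≤ Pseq k) :
    ∃ t ∈ T, s <+: t ∧ ∃ i : ℕ, i < Nseq (ind t) ∧ i ∉ u (ind t) ∧
      t ++ [i] ∈ T := by
  obtain ⟨s', hs', hss', hlen⟩ := hT.exists_prefix_length_le hs 2
  obtain ⟨t, ht, hs't, hsucc⟩ := hT.2.2.2 s' hs' 2
  have htTr : t ∈ Tr := hT.2.1 ht
  have hP : 2 ≤ Pseq (ind t) :=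
    two_le_Pseq ((hlen.trans hs't.length_le).trans (hM.length_le_ind htTr))
  have hcard : (u (ind t)).card < Pseq (ind t) ^ 2 :=
    (hu2 _).trans_lt (by nlinarith)
  obtain ⟨i, hiu, hi⟩ := hsucc.exists_notMem hcard
  exact ⟨t, ht, hss'.trans hs't, i, (hM.2.2.2.2.2 t htTr i).1 (hT.2.1 hi), hiu, hi⟩

/-- Let `T ∈ 𝒫`, `s ∈ T`, and let `u` assign to each `k` a set
`u k ⊆ {0, …, N_k − 1}` with `|u k| ≤ P_k`. Then there are `t ∈ T` with
`s ⊆ t` and `i < N_{ind t}` such that `i ∉ u (ind t)` and `t ⌢ i ∈ T`. -/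
theorem exists_successor_avoiding
    (Tr : Set (List ℕ)) (ind : List ℕ → ℕ) (hM : IsMasterTree Tr ind)
    (T : Set (List ℕ)) (hT : InForcing Tr ind T) (s : List ℕ) (hs : s ∈ T)
    (u : ℕ → Finset ℕ)
    (hu1 : ∀ k : ℕ, ∀ i ∈ u k, i < Nseq k)
    (hu2 : ∀ k : ℕ, (u k).card ≤ Pseq k) :
    ∃ t ∈ T, s <+: t ∧ ∃ i : ℕ, i < Nseq (ind t) ∧ i ∉ u (ind t) ∧
      t ++ [i] ∈ T :=
  exists_successor_avoiding_general Tr ind hM T hT s hs u hu2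
end
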